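/- arXiv:1907.02261 — 2 statements merged into one kernel-verified Lean document; each statement's English description precedes it below -/
import Mathlib

section
/- Let m(x) = Σ_{k=1}^K β_k N(x|ν_k, T_k) be a Gaussian mixture on ℝ^d that is consistent with the data set f with parameter ε = 1. Then m and f have the same mean: ∫_{ℝ^d} x m(x) dx = ∫_{ℝ^d} x f(x) dx. -/
/-!
Weighting the consistency equations for the means by `β k = ∫ γ k f` and summing over `k` gives
`∑ k, β k ν k = ∫ x (∑ k, γ k x) f x dx = ∫ x f x dx`, because the responsibilities sum to one.
The mixture has mean `∑ k, β k ν k` because each component `N(·|ν, T)` has mean `ν`: writing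
`T = A Aᵀ`, the substitution `x = ν + A y` turns it into the standard Gaussian, which is a product
of one-dimensional ones.
-/

open MeasureTheory Matrix

/-- The Gaussian density `N(x|ν,T)` on `ℝ^d`. -/
noncomputable def gaussian {d : ℕ} (ν : Fin d → ℝ) (T : Matrix (Fin d) (Fin d) ℝ)
    (x : Fin d → ℝ) : ℝ :=
  (2 * Real.pi) ^ (-(d : ℝ) / 2) * T.det ^ (-(1 : ℝ) / 2) *
    Real.exp (-(1 / 2) * ((x - ν) ⬝ᵥ (T⁻¹ *ᵥ (x - ν))))

open Real

section StandardGaussian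

variable {ι : Type*} [Fintype ι]

lemma exp_neg_half_dotProduct_self (y : ι → ℝ) :
    exp (-(1 / 2) * (y ⬝ᵥ y)) = ∏ l, exp (-(1 / 2) * y l ^ 2) := by
  rw [← exp_sum, dotProduct, Finset.mul_sum]
  simp only [sq]

lemma apply_mul_exp_neg_half_dotProduct_self [DecidableEq ι] (j : ι) (y : ι → ℝ) :
    y j * exp (-(1 / 2) * (y ⬝ᵥ y)) =
      ∏ l, (if l = j then y l else 1) * exp (-(1 / 2) * y l ^ 2) := by
  rw [Finset.prod_mul_distrib, ← exp_neg_half_dotProduct_self]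
  simp

lemma integrable_exp_neg_half_dotProduct_self :
    Integrable fun y : ι → ℝ => exp (-(1 / 2) * (y ⬝ᵥ y)) := by
  simp_rw [exp_neg_half_dotProduct_self]
  exact Integrable.fintype_prod fun _ => integrable_exp_neg_mul_sq (by norm_num)

lemma integrable_apply_mul_exp_neg_half_dotProduct_self (j : ι) :
    Integrable fun y : ι → ℝ => y j * exp (-(1 / 2) * (y ⬝ᵥ y)) := by
  classical
  simp_rw [apply_mul_exp_neg_half_dotProduct_self j]
  refine Integrable.fintype_prod
    (f := fun l t => (if l = j then t else 1) * exp (-(1 / 2) * t ^ 2)) fun l => ?_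
  split_ifs
  · exact integrable_mul_exp_neg_mul_sq (by norm_num)
  · simpa using integrable_exp_neg_mul_sq (b := 1 / 2) (by norm_num)

lemma integral_exp_neg_half_dotProduct_self :
    ∫ y : ι → ℝ, exp (-(1 / 2) * (y ⬝ᵥ y)) = (2 * π) ^ ((Fintype.card ι : ℝ) / 2) := by
  simp_rw [exp_neg_half_dotProduct_self]
  rw [volume_pi, integral_fintype_prod_eq_pow (fun t : ℝ => exp (-(1 / 2) * t ^ 2)),
    integral_gaussian, div_div_eq_mul_div, sqrt_eq_rpow, ← rpow_natCast,
    ← rpow_mul (by positivity)]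
  ring_nf

lemma integral_apply_mul_exp_neg_half_dotProduct_self (j : ι) :
    ∫ y : ι → ℝ, y j * exp (-(1 / 2) * (y ⬝ᵥ y)) = 0 := by
  have h := integral_neg_eq_self (fun y : ι → ℝ => y j * exp (-(1 / 2) * (y ⬝ᵥ y))) volume
  simp only [Pi.neg_apply, neg_dotProduct, dotProduct_neg, neg_neg, neg_mul, integral_neg] at h ⊢
  linarith

end StandardGaussian

section ChangeOfVariables

variable {ι : Type*} [Fintype ι] [DecidableEq ι]
  {E : Type*} [NormedAddCommGroup E] [NormedSpace ℝ E]

lemma hasFDerivAt_add_mulVec (ν : ι → ℝ) (A : Matrix ι ι ℝ) (y : ι → ℝ) :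
    HasFDerivAt (fun y => ν + A *ᵥ y) (LinearMap.toContinuousLinearMap (toLin' A)) y := by
  simpa using (LinearMap.toContinuousLinearMap (toLin' A)).hasFDerivAt.const_add ν

lemma range_add_mulVec {A : Matrix ι ι ℝ} (hA : IsUnit A) (ν : ι → ℝ) :
    Set.range (fun y => ν + A *ᵥ y) = Set.univ := by
  refine Set.eq_univ_of_forall fun x => ⟨A⁻¹ *ᵥ (x - ν), ?_⟩
  simp [mulVec_mulVec, mul_nonsing_inv _ ((isUnit_iff_isUnit_det A).mp hA)]

lemma integral_comp_add_mulVec {A : Matrix ι ι ℝ} (hA : IsUnit A) (ν : ι → ℝ)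
    (F : (ι → ℝ) → E) :
    ∫ x, F x = |A.det| • ∫ y, F (ν + A *ᵥ y) := by
  have h := integral_image_eq_integral_abs_det_fderiv_smul volume MeasurableSet.univ
    (fun y _ => (hasFDerivAt_add_mulVec ν A y).hasFDerivWithinAt)
    (fun y _ z _ h => (mulVec_injective_iff_isUnit.mpr hA) (add_left_cancel h)) F
  rw [Set.image_univ, range_add_mulVec hA] at h
  simpa [LinearMap.det_toContinuousLinearMap, integral_smul] using h

lemma integrable_comp_add_mulVec_iff {A : Matrix ι ι ℝ} (hA : IsUnit A) (ν : ι → ℝ)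
    {F : (ι → ℝ) → E} : Integrable (fun y => F (ν + A *ᵥ y)) ↔ Integrable F := by
  have h := integrableOn_image_iff_integrableOn_abs_det_fderiv_smul volume MeasurableSet.univ
    (fun y _ => (hasFDerivAt_add_mulVec ν A y).hasFDerivWithinAt)
    (fun y _ z _ h => (mulVec_injective_iff_isUnit.mpr hA) (add_left_cancel h)) F
  rw [Set.image_univ, range_add_mulVec hA] at h
  have hdet : A.det ≠ 0 := ((isUnit_iff_isUnit_det A).mp hA).ne_zero
  simp only [integrableOn_univ, LinearMap.det_toContinuousLinearMap, LinearMap.det_toLin'] at h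
  exact (h.trans (integrable_smul_iff (abs_ne_zero.mpr hdet) _)).symm

end ChangeOfVariables

section SquareRoot

variable {n : Type*} [Fintype n] [DecidableEq n]

open scoped MatrixOrder in
lemma Matrix.PosDef.exists_mul_transpose_eq {T : Matrix n n ℝ} (hT : T.PosDef) :
    ∃ A : Matrix n n ℝ, A * Aᵀ = T := by
  refine ⟨CFC.sqrt T, ?_⟩
  have hsymm : (CFC.sqrt T)ᵀ = CFC.sqrt T := (CFC.sqrt_nonneg T).posSemidef.1
  rw [hsymm, CFC.sqrt_mul_sqrt_self T hT.posSemidef.nonneg]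

variable {A T : Matrix n n ℝ}

lemma abs_det_eq_sqrt_det_of_mul_transpose_eq (hAT : A * Aᵀ = T) : |A.det| = √T.det := by
  rw [← hAT, det_mul, det_transpose, sqrt_mul_self_eq_abs]

lemma isUnit_of_mul_transpose_eq (hT : T.PosDef) (hAT : A * Aᵀ = T) : IsUnit A := by
  rw [isUnit_iff_isUnit_det, isUnit_iff_ne_zero, ← abs_pos,
    abs_det_eq_sqrt_det_of_mul_transpose_eq hAT]
  exact sqrt_pos.mpr hT.det_pos

lemma dotProduct_inv_mulVec_of_mul_transpose_eq (hA : IsUnit A) (hAT : A * Aᵀ = T)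
    (y : n → ℝ) : (A *ᵥ y) ⬝ᵥ (T⁻¹ *ᵥ (A *ᵥ y)) = y ⬝ᵥ y := by
  have hAdet := (isUnit_iff_isUnit_det A).mp hA
  have hAtdet : IsUnit Aᵀ.det := by rwa [det_transpose]
  have hone : Aᵀ * T⁻¹ * A = 1 := by
    rw [← hAT, Matrix.mul_inv_rev, Matrix.mul_assoc, Matrix.mul_assoc, nonsing_inv_mul _ hAdet,
      Matrix.mul_one, mul_nonsing_inv _ hAtdet]
  rw [dotProduct_mulVec, ← vecMul_transpose, vecMul_vecMul, vecMul_transpose, dotProduct_mulVec,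
    vecMul_vecMul, hone, vecMul_one]

end SquareRoot

section Gaussian

variable {d : ℕ} {ν : Fin d → ℝ} {A T : Matrix (Fin d) (Fin d) ℝ}

lemma gaussian_pos (hT : T.PosDef) (x : Fin d → ℝ) : 0 < gaussian ν T x := by
  unfold gaussian
  have := hT.det_pos
  positivity

lemma gaussian_add_mulVec (hT : T.PosDef) (hAT : A * Aᵀ = T) (y : Fin d → ℝ) :
    gaussian ν T (ν + A *ᵥ y) =
      |A.det|⁻¹ * ((2 * π) ^ (-(d : ℝ) / 2) * exp (-(1 / 2) * (y ⬝ᵥ y))) := by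
  have hdet : T.det ^ (-(1 : ℝ) / 2) = |A.det|⁻¹ := by
    rw [abs_det_eq_sqrt_det_of_mul_transpose_eq hAT, sqrt_eq_rpow, ← rpow_neg hT.det_pos.le]
    ring_nf
  rw [gaussian, add_sub_cancel_left,
    dotProduct_inv_mulVec_of_mul_transpose_eq (isUnit_of_mul_transpose_eq hT hAT) hAT, hdet]
  ring

lemma apply_mul_gaussian_add_mulVec (hT : T.PosDef) (hAT : A * Aᵀ = T) (i : Fin d)
    (y : Fin d → ℝ) :
    (ν + A *ᵥ y) i * gaussian ν T (ν + A *ᵥ y) =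
      |A.det|⁻¹ * (2 * π) ^ (-(d : ℝ) / 2) *
        (ν i * exp (-(1 / 2) * (y ⬝ᵥ y)) + ∑ j, A i j * (y j * exp (-(1 / 2) * (y ⬝ᵥ y)))) := by
  rw [gaussian_add_mulVec hT hAT, Pi.add_apply, mulVec, dotProduct, add_mul, mul_add,
    Finset.sum_mul, Finset.mul_sum]
  congr 1
  · ring
  · exact Finset.sum_congr rfl fun j _ => by ring

lemma integrable_apply_mul_gaussian (hT : T.PosDef) (i : Fin d) :
    Integrable fun x => x i * gaussian ν T x := by
  obtain ⟨A, hAT⟩ := hT.exists_mul_transpose_eq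
  rw [← integrable_comp_add_mulVec_iff (isUnit_of_mul_transpose_eq hT hAT) ν]
  simp_rw [apply_mul_gaussian_add_mulVec hT hAT]
  exact (integrable_exp_neg_half_dotProduct_self.const_mul _ |>.add <| integrable_finsetSum _
    fun j _ => (integrable_apply_mul_exp_neg_half_dotProduct_self j).const_mul _).const_mul _

lemma integral_apply_mul_gaussian (hT : T.PosDef) (i : Fin d) :
    ∫ x, x i * gaussian ν T x = ν i := by
  obtain ⟨A, hAT⟩ := hT.exists_mul_transpose_eq
  have hA := isUnit_of_mul_transpose_eq hT hAT
  rw [integral_comp_add_mulVec hA ν]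
  simp_rw [apply_mul_gaussian_add_mulVec hT hAT]
  rw [integral_const_mul, integral_add (integrable_exp_neg_half_dotProduct_self.const_mul _)
      (integrable_finsetSum _ fun j _ =>
        (integrable_apply_mul_exp_neg_half_dotProduct_self j).const_mul _),
    integral_finsetSum _ fun j _ =>
      (integrable_apply_mul_exp_neg_half_dotProduct_self j).const_mul _]
  simp only [integral_const_mul, integral_apply_mul_exp_neg_half_dotProduct_self,
    integral_exp_neg_half_dotProduct_self, Fintype.card_fin, mul_zero, Finset.sum_const_zero,
    add_zero, smul_eq_mul]
  have hdet : |A.det| * |A.det|⁻¹ = 1 :=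
    mul_inv_cancel₀ (abs_ne_zero.mpr ((isUnit_iff_isUnit_det A).mp hA).ne_zero)
  have hpow : (2 * π) ^ (-(d : ℝ) / 2) * (2 * π) ^ ((d : ℝ) / 2) = 1 := by
    rw [← rpow_add (by positivity), neg_div, neg_add_cancel, rpow_zero]
  linear_combination
    (ν i * (2 * π) ^ (-(d : ℝ) / 2) * (2 * π) ^ ((d : ℝ) / 2)) * hdet + ν i * hpow

end Gaussian

lemma integral_apply_mul_sum_gaussian {d K : ℕ} (β : Fin K → ℝ) (ν : Fin K → Fin d → ℝ)
    {T : Fin K → Matrix (Fin d) (Fin d) ℝ} (hT : ∀ k, (T k).PosDef) (i : Fin d) :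
    ∫ x, x i * ∑ k, β k * gaussian (ν k) (T k) x = ∑ k, β k * ν k i := by
  have hsum : ∀ x : Fin d → ℝ, x i * ∑ k, β k * gaussian (ν k) (T k) x =
      ∑ k, β k * (x i * gaussian (ν k) (T k) x) := fun x => by
    rw [Finset.mul_sum]
    exact Finset.sum_congr rfl fun k _ => mul_left_comm _ _ _
  simp_rw [hsum]
  rw [integral_finsetSum _ fun k _ => (integrable_apply_mul_gaussian (hT k) i).const_mul _]
  simp_rw [integral_const_mul, integral_apply_mul_gaussian (hT _)]

section Moments

variable {α : Type*} [MeasurableSpace α] {μ : Measure α}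

lemma MeasureTheory.Integrable.mul_of_sq_sub_mul {φ h : α → ℝ} (hh : Integrable h μ) (c : ℝ)
    (hφ : AEStronglyMeasurable φ μ) (hsq : Integrable (fun x => (φ x - c) * (φ x - c) * h x) μ) :
    Integrable (fun x => φ x * h x) μ := by
  refine (hsq.norm.add (hh.norm.const_mul (1 + |c|))).mono' (hφ.mul hh.1)
    (ae_of_all _ fun x => ?_)
  have hφc : |φ x| ≤ (φ x - c) * (φ x - c) + (1 + |c|) := by
    nlinarith [abs_sub_abs_le_abs_sub (φ x) c, abs_mul_abs_self (φ x - c), abs_nonneg c]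
  simp only [Pi.add_apply, Real.norm_eq_abs, abs_mul, abs_mul_abs_self]
  nlinarith [abs_nonneg (h x)]

lemma integral_mul_eq_sum_integral_mul {ι : Type*} [Fintype ι] {γ : ι → α → ℝ}
    (hγ : ∀ x, ∑ k, γ k x = 1) {g f : α → ℝ}
    (hint : ∀ k, Integrable (fun x => g x * γ k x * f x) μ) :
    ∫ x, g x * f x ∂μ = ∑ k, ∫ x, g x * γ k x * f x ∂μ := by
  rw [← integral_finsetSum _ fun k _ => hint k]
  congr 1 with x
  rw [← Finset.sum_mul, ← Finset.mul_sum, hγ, mul_one]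

end Moments

theorem mixture_consistent_same_mean_general {d K : ℕ}
    (f : (Fin d → ℝ) → ℝ)
    (β : Fin K → ℝ) (hβ : ∀ k, β k ∈ Set.Ioo (0 : ℝ) 1) (hβ1 : ∑ k, β k = 1)
    (ν : Fin K → Fin d → ℝ) (T : Fin K → Matrix (Fin d) (Fin d) ℝ)
    (hTpos : ∀ k, (T k).PosDef)
    (m : (Fin d → ℝ) → ℝ) (hm : ∀ x, m x = ∑ k, β k * gaussian (ν k) (T k) x)
    (γ : Fin K → (Fin d → ℝ) → ℝ)
    (hγ : ∀ k x, γ k x = β k * gaussian (ν k) (T k) x / m x)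
    -- consistency with the data set, with parameter ε = 1 :
    (hmean : ∀ k i, ν k i = (∫ x, x i * γ k x * f x) / ∫ x, γ k x * f x)
    (hcov : ∀ k i j, T k i j =
      (1 : ℝ) * (∫ x, (x i - ν k i) * (x j - ν k j) * γ k x * f x) / ∫ x, γ k x * f x)
    (hweight : ∀ k, β k = ∫ x, γ k x * f x) :
    ∀ i, ∫ x, x i * m x = ∫ x, x i * f x := by
  intro i
  have hK : (Finset.univ : Finset (Fin K)).Nonempty :=
    Finset.nonempty_of_sum_ne_zero (hβ1 ▸ one_ne_zero)
  have hmpos : ∀ x, 0 < m x := fun x =>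
    hm x ▸ Finset.sum_pos (fun k _ => mul_pos (hβ k).1 (gaussian_pos (hTpos k) x)) hK
  have hγsum : ∀ x, ∑ k, γ k x = 1 := fun x => by
    simp_rw [hγ, ← Finset.sum_div, ← hm, div_self (hmpos x).ne']
  have hweight_ne : ∀ k, ∫ x, γ k x * f x ≠ 0 := fun k => hweight k ▸ (hβ k).1.ne'
  -- a non-integrable integrand would have integral `0`, forcing `T k i i = 0`
  have hsq : ∀ k, Integrable fun x => (x i - ν k i) * (x i - ν k i) * γ k x * f x :=
    fun k => .of_integral_ne_zero fun h => ((hTpos k).diag_pos (i := i)).ne' <| by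
      rw [hcov, h, mul_zero, zero_div]
  have hcoord : ∀ k, Integrable fun x => x i * γ k x * f x := fun k => by
    simpa only [mul_assoc] using
      (Integrable.of_integral_ne_zero (hweight_ne k)).mul_of_sq_sub_mul (ν k i)
        (continuous_apply i).aestronglyMeasurable (by simpa only [mul_assoc] using hsq k)
  calc ∫ x, x i * m x = ∑ k, β k * ν k i := by
        simp_rw [hm]; exact integral_apply_mul_sum_gaussian β ν hTpos i
    _ = ∑ k, ∫ x, x i * γ k x * f x := Finset.sum_congr rfl fun k _ => by
        rw [hmean k i, hweight k, mul_div_cancel₀ _ (hweight_ne k)]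
    _ = ∫ x, x i * f x := (integral_mul_eq_sum_integral_mul hγsum hcoord).symm

/-- A Gaussian mixture consistent with the data set `f` with parameter `ε = 1`
has the same mean as `f`. -/
theorem mixture_consistent_same_mean {d K : ℕ}
    (f : (Fin d → ℝ) → ℝ) (hf0 : ∀ x, 0 ≤ f x) (hf1 : ∫ x, f x = 1)
    (β : Fin K → ℝ) (hβ : ∀ k, β k ∈ Set.Ioo (0 : ℝ) 1) (hβ1 : ∑ k, β k = 1)
    (ν : Fin K → Fin d → ℝ) (T : Fin K → Matrix (Fin d) (Fin d) ℝ)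
    (hTsymm : ∀ k, (T k).IsSymm) (hTpos : ∀ k, (T k).PosDef)
    (m : (Fin d → ℝ) → ℝ) (hm : ∀ x, m x = ∑ k, β k * gaussian (ν k) (T k) x)
    (γ : Fin K → (Fin d → ℝ) → ℝ)
    (hγ : ∀ k x, γ k x = β k * gaussian (ν k) (T k) x / m x)
    -- consistency with the data set, with parameter ε = 1 :
    (hmean : ∀ k i, ν k i = (∫ x, x i * γ k x * f x) / ∫ x, γ k x * f x)
    (hcov : ∀ k i j, T k i j =
      (1 : ℝ) * (∫ x, (x i - ν k i) * (x j - ν k j) * γ k x * f x) / ∫ x, γ k x * f x)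
    (hweight : ∀ k, β k = ∫ x, γ k x * f x) :
    ∀ i, ∫ x, x i * m x = ∫ x, x i * f x :=
  mixture_consistent_same_mean_general f β hβ hβ1 ν T hTpos m hm γ hγ hmean hcov hweight
end

section
/- Let m(x) = Σ_{k=1}^K β_k N(x|ν_k, T_k) be a Gaussian mixture on ℝ^d that is consistent with the data set f with parameter ε > 0. Then the family of quadruples (u_k, λ_k, m_k, β_k), k = 1,…,K, with u_k(x) = (ε/2)(x-ν_k)ᵀ T_k^{-1} (x-ν_k), λ_k = ε² Tr(T_k^{-1}), and m_k(x) = N(x|ν_k, T_k), is a solution of the multi-population mean field games system: for each k, -ε Δu_k + ½|Du_k|² + λ_k = ½ (x-μ_k)ᵀ (Σ_k^{-1})ᵀ Σ_k^{-1} (x-μ_k) on ℝ^d, ε Δm_k + div(m_k Du_k) = 0 on ℝ^d, β_k = ∫ γ_k(x) f(x) dx, together with m_k ≥ 0, ∫ m_k dx = 1, u_k(μ_k) = 0, where γ_k(x) = β_k m_k(x)/m(x), μ_k = (∫ x γ_k(x) f(x) dx)/(∫ γ_k(x) f(x) dx), and Σ_k = (∫ (x-μ_k)(x-μ_k)ᵀ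 γ_k(x) f(x) dx)/(∫ γ_k(x) f(x) dx). -/
open MeasureTheory Matrix

/-- The gradient `Du` of a function `u : ℝ^d → ℝ`, as the vector of partial derivatives. -/
noncomputable def grad {d : ℕ} (u : (Fin d → ℝ) → ℝ) (x : Fin d → ℝ) : Fin d → ℝ :=
  fun i => fderiv ℝ u x (Pi.single i 1)

/-- The Laplacian `Δu` of a function `u : ℝ^d → ℝ`. -/
noncomputable def lap {d : ℕ} (u : (Fin d → ℝ) → ℝ) (x : Fin d → ℝ) : ℝ :=
  ∑ i, fderiv ℝ (fun y => fderiv ℝ u y (Pi.single i 1)) x (Pi.single i 1)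

/-- The divergence of a vector field `V : ℝ^d → ℝ^d`. -/
noncomputable def dvg {d : ℕ} (V : (Fin d → ℝ) → Fin d → ℝ) (x : Fin d → ℝ) : ℝ :=
  ∑ i, fderiv ℝ (fun y => V y i) x (Pi.single i 1)

/-! `u_k` is `ε/2` times the quadratic form of `T_k⁻¹` centred at `ν_k`, so `Du_k = ε T_k⁻¹ (x - ν_k)`
and `Δu_k = ε tr T_k⁻¹`. Consistency gives `μ_k = ν_k` and `Σ_k = ε⁻¹ T_k`, and the Hamilton–Jacobi
equation becomes an identity between quadratic forms. Since `m_k ∝ exp (-u_k / ε)`, we have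
`m_k Du_k = -ε Dm_k`, hence `div (m_k Du_k) = -ε Δm_k`, which is the Fokker–Planck equation. The
mass of `m_k` is computed by writing `T_k⁻¹ = BᵀB` and substituting `z = B (x - ν_k)`. -/

section

variable {d : ℕ}

lemma lap_eq_dvg_grad (u : (Fin d → ℝ) → ℝ) : lap u = dvg (grad u) := rfl

lemma grad_const_mul (c : ℝ) (u : (Fin d → ℝ) → ℝ) (x : Fin d → ℝ) :
    grad (fun y => c * u y) x = c • grad u x := by
  funext i
  rw [grad, show (fun y => c * u y) = c • u from rfl, fderiv_const_smul_field]
  rfl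

lemma dvg_const_smul (c : ℝ) (V : (Fin d → ℝ) → Fin d → ℝ) (x : Fin d → ℝ) :
    dvg (fun y => c • V y) x = c * dvg V x := by
  simp only [dvg, Finset.mul_sum]
  refine Finset.sum_congr rfl fun i _ => ?_
  rw [show (fun y => (c • V y) i) = c • fun y => V y i from rfl, fderiv_const_smul_field]
  rfl

lemma grad_exp {u : (Fin d → ℝ) → ℝ} {x : Fin d → ℝ} (hu : DifferentiableAt ℝ u x) :
    grad (fun y => Real.exp (u y)) x = Real.exp (u x) • grad u x := by
  funext i
  simp [grad, fderiv_exp hu]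

lemma hasFDerivAt_mulVec_sub (B : Matrix (Fin d) (Fin d) ℝ) (ν x : Fin d → ℝ) :
    HasFDerivAt (fun y => B *ᵥ (y - ν)) (LinearMap.toContinuousLinearMap B.mulVecLin) x := by
  simpa using (LinearMap.toContinuousLinearMap B.mulVecLin).hasFDerivAt.comp x
    ((hasFDerivAt_id x).sub_const ν)

lemma dvg_mulVec_sub (B : Matrix (Fin d) (Fin d) ℝ) (ν x : Fin d → ℝ) :
    dvg (fun y => B *ᵥ (y - ν)) x = B.trace := by
  refine Finset.sum_congr rfl fun i _ => ?_
  rw [(hasFDerivAt_pi'.1 (hasFDerivAt_mulVec_sub B ν x) i).fderiv]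
  simp

lemma differentiable_quadForm (A : Matrix (Fin d) (Fin d) ℝ) (ν : Fin d → ℝ) :
    Differentiable ℝ (fun y => (y - ν) ⬝ᵥ (A *ᵥ (y - ν))) := by
  simp only [dotProduct, mulVec]
  fun_prop

lemma fderiv_quadForm_apply (A : Matrix (Fin d) (Fin d) ℝ) (ν x h : Fin d → ℝ) :
    fderiv ℝ (fun y => (y - ν) ⬝ᵥ (A *ᵥ (y - ν))) x h
      = (x - ν) ⬝ᵥ (A *ᵥ h) + h ⬝ᵥ (A *ᵥ (x - ν)) := by
  have hsub : DifferentiableAt ℝ (fun y : Fin d → ℝ => y - ν) x := by fun_prop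
  have hderiv := (toLinearMap₂' ℝ A).toContinuousBilinearMap.fderiv_of_bilinear hsub hsub
  simp only [LinearMap.toContinuousBilinearMap_apply, toLinearMap₂'_apply'] at hderiv
  rw [hderiv]
  simp [toLinearMap₂'_apply', fderiv_sub_const, mulVec_sub]

lemma grad_quadForm {A : Matrix (Fin d) (Fin d) ℝ} (hA : A.IsSymm) (ν x : Fin d → ℝ) :
    grad (fun y => (y - ν) ⬝ᵥ (A *ᵥ (y - ν))) x = (2 : ℝ) • (A *ᵥ (x - ν)) := by
  funext i
  rw [grad, fderiv_quadForm_apply, dotProduct_mulVec, ← mulVec_transpose, hA.eq,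
    dotProduct_single, single_dotProduct]
  simp [two_mul]

lemma grad_half_mul_quadForm {A : Matrix (Fin d) (Fin d) ℝ} (hA : A.IsSymm) (c : ℝ)
    (ν x : Fin d → ℝ) :
    grad (fun y => c / 2 * ((y - ν) ⬝ᵥ (A *ᵥ (y - ν)))) x = c • (A *ᵥ (x - ν)) := by
  rw [grad_const_mul, grad_quadForm hA, smul_smul, div_mul_cancel₀ c two_ne_zero]

lemma lap_half_mul_quadForm {A : Matrix (Fin d) (Fin d) ℝ} (hA : A.IsSymm) (c : ℝ)
    (ν x : Fin d → ℝ) :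
    lap (fun y => c / 2 * ((y - ν) ⬝ᵥ (A *ᵥ (y - ν)))) x = c * A.trace := by
  rw [lap_eq_dvg_grad, funext (grad_half_mul_quadForm hA c ν), dvg_const_smul, dvg_mulVec_sub]

lemma hamiltonJacobi_half_mul_quadForm {A : Matrix (Fin d) (Fin d) ℝ} (hA : A.IsSymm)
    (c : ℝ) (ν x : Fin d → ℝ) :
    -c * lap (fun y => c / 2 * ((y - ν) ⬝ᵥ (A *ᵥ (y - ν)))) x
      + 1 / 2 * (grad (fun y => c / 2 * ((y - ν) ⬝ᵥ (A *ᵥ (y - ν)))) x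
        ⬝ᵥ grad (fun y => c / 2 * ((y - ν) ⬝ᵥ (A *ᵥ (y - ν)))) x) + c ^ 2 * A.trace
      = 1 / 2 * ((x - ν) ⬝ᵥ ((c • A)ᵀ *ᵥ ((c • A) *ᵥ (x - ν)))) := by
  rw [lap_half_mul_quadForm hA, grad_half_mul_quadForm hA, dotProduct_mulVec,
    ← mulVec_transpose, transpose_transpose, smul_mulVec, smul_dotProduct, dotProduct_smul,
    smul_eq_mul, smul_eq_mul]
  ring

lemma fokkerPlanck_of_smul_grad_eq {ε : ℝ} {m u : (Fin d → ℝ) → ℝ}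
    (h : ∀ y, m y • grad u y = -ε • grad m y) (x : Fin d → ℝ) :
    ε * lap m x + dvg (fun y => m y • grad u y) x = 0 := by
  rw [funext h, dvg_const_smul, lap_eq_dvg_grad]
  ring

lemma gaussian_nonneg {T : Matrix (Fin d) (Fin d) ℝ} (hT : 0 ≤ T.det) (ν x : Fin d → ℝ) :
    0 ≤ gaussian ν T x :=
  mul_nonneg (mul_nonneg (Real.rpow_nonneg (by positivity) _) (Real.rpow_nonneg hT _))
    (Real.exp_pos _).le

lemma grad_gaussian {T : Matrix (Fin d) (Fin d) ℝ} (hT : T⁻¹.IsSymm) (ν x : Fin d → ℝ) :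
    grad (gaussian ν T) x = -gaussian ν T x • (T⁻¹ *ᵥ (x - ν)) := by
  have hq : DifferentiableAt ℝ (fun y => -(1 / 2) * ((y - ν) ⬝ᵥ (T⁻¹ *ᵥ (y - ν)))) x :=
    (differentiable_quadForm T⁻¹ ν x).const_mul _
  change grad (fun y => _ * Real.exp (-(1 / 2) * ((y - ν) ⬝ᵥ (T⁻¹ *ᵥ (y - ν))))) x = _
  rw [grad_const_mul, grad_exp hq, grad_const_mul, grad_quadForm hT, smul_smul, smul_smul,
    smul_smul, gaussian]
  congr 1
  ring

lemma gaussian_smul_grad_half_mul_quadForm {T : Matrix (Fin d) (Fin d) ℝ} (hT : T⁻¹.IsSymm)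
    (ε : ℝ) (ν y : Fin d → ℝ) :
    gaussian ν T y • grad (fun y => ε / 2 * ((y - ν) ⬝ᵥ (T⁻¹ *ᵥ (y - ν)))) y
      = -ε • grad (gaussian ν T) y := by
  rw [grad_half_mul_quadForm hT, grad_gaussian hT, smul_smul, smul_smul]
  congr 1
  ring

lemma integral_comp_mulVec {S : Matrix (Fin d) (Fin d) ℝ} (hS : S.det ≠ 0)
    (g : (Fin d → ℝ) → ℝ) :
    ∫ x, g (S *ᵥ x) = |S.det|⁻¹ * ∫ y, g y := by
  have hdet : LinearMap.det (toLin' S) ≠ 0 := by rwa [LinearMap.det_toLin']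
  let e := (S.toLinearEquiv' (S.invertibleOfIsUnitDet hS.isUnit)).toContinuousLinearEquiv
  have h := e.toHomeomorph.measurableEmbedding.integral_map (μ := volume) g
  rw [show (e.toHomeomorph : (Fin d → ℝ) → Fin d → ℝ) = toLin' S from rfl,
    Measure.map_linearMap_addHaar_pi_eq_smul_addHaar hdet, integral_smul_measure,
    LinearMap.det_toLin', ENNReal.toReal_ofReal (abs_nonneg _), abs_inv, smul_eq_mul] at h
  simpa using h.symm

lemma integral_exp_neg_half_dotProduct_self_s6 :
    ∫ y : Fin d → ℝ, Real.exp (-(1 / 2) * (y ⬝ᵥ y)) = √(2 * Real.pi) ^ d := by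
  have hprod : (fun y : Fin d → ℝ => Real.exp (-(1 / 2) * (y ⬝ᵥ y)))
      = fun y => ∏ i, Real.exp (-(1 / 2) * y i ^ 2) := by
    funext y
    rw [← Real.exp_sum, dotProduct, Finset.mul_sum]
    simp only [sq]
  rw [hprod, integral_fintype_prod_volume_eq_pow fun t => Real.exp (-(1 / 2) * t ^ 2),
    Fintype.card_fin, integral_gaussian]
  congr 2
  ring

open scoped MatrixOrder in
lemma integral_exp_neg_half_quadForm {T : Matrix (Fin d) (Fin d) ℝ} (hT : T.PosDef)
    (ν : Fin d → ℝ) :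
    ∫ x, Real.exp (-(1 / 2) * ((x - ν) ⬝ᵥ (T⁻¹ *ᵥ (x - ν))))
      = √(2 * Real.pi) ^ d * √T.det := by
  obtain ⟨B, hB⟩ := CStarAlgebra.nonneg_iff_eq_star_mul_self.mp hT.inv.posSemidef.nonneg
  have hquad : ∀ z, z ⬝ᵥ (T⁻¹ *ᵥ z) = (B *ᵥ z) ⬝ᵥ (B *ᵥ z) := fun z => by
    rw [hB, star_eq_conjTranspose, conjTranspose_eq_transpose_of_trivial, ← mulVec_mulVec,
      dotProduct_mulVec, ← mulVec_transpose, transpose_transpose]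
  have hdetB : B.det ^ 2 = T.det⁻¹ := by
    rw [← Ring.inverse_eq_inv', ← det_nonsing_inv, hB, det_mul, star_eq_conjTranspose,
      det_conjTranspose, star_trivial, sq]
  have hB0 : B.det ≠ 0 := by
    intro h
    rw [h, zero_pow two_ne_zero] at hdetB
    exact (inv_pos.2 hT.det_pos).ne hdetB
  calc ∫ x, Real.exp (-(1 / 2) * ((x - ν) ⬝ᵥ (T⁻¹ *ᵥ (x - ν))))
      = ∫ z, Real.exp (-(1 / 2) * ((B *ᵥ z) ⬝ᵥ (B *ᵥ z))) := by
        simp_rw [← hquad]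
        exact integral_sub_right_eq_self (fun z => Real.exp (-(1 / 2) * (z ⬝ᵥ (T⁻¹ *ᵥ z)))) ν
    _ = √(2 * Real.pi) ^ d * √T.det := by
        rw [integral_comp_mulVec hB0 fun y => Real.exp (-(1 / 2) * (y ⬝ᵥ y)),
          integral_exp_neg_half_dotProduct_self_s6, ← Real.sqrt_sq_eq_abs, hdetB, Real.sqrt_inv,
          inv_inv, mul_comm]

lemma integral_gaussian_eq_one {T : Matrix (Fin d) (Fin d) ℝ} (hT : T.PosDef)
    (ν : Fin d → ℝ) :
    ∫ x, gaussian ν T x = 1 := by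
  have h2π : (0 : ℝ) < 2 * Real.pi := by positivity
  rw [show (∫ x, gaussian ν T x) = _ * ∫ x, Real.exp (-(1 / 2) * ((x - ν) ⬝ᵥ (T⁻¹ *ᵥ (x - ν))))
      from integral_const_mul _ _, integral_exp_neg_half_quadForm hT, Real.sqrt_eq_rpow,
    Real.sqrt_eq_rpow, ← Real.rpow_natCast, ← Real.rpow_mul h2π.le]
  calc (2 * Real.pi) ^ (-(d : ℝ) / 2) * T.det ^ (-(1 : ℝ) / 2)
        * ((2 * Real.pi) ^ (1 / 2 * (d : ℝ)) * T.det ^ (1 / 2 : ℝ))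
      = (2 * Real.pi) ^ (-(d : ℝ) / 2 + 1 / 2 * d) * T.det ^ (-(1 : ℝ) / 2 + 1 / 2) := by
        rw [Real.rpow_add h2π, Real.rpow_add hT.det_pos]
        ring
    _ = 1 := by
        rw [show -(d : ℝ) / 2 + 1 / 2 * d = 0 by ring, show -(1 : ℝ) / 2 + 1 / 2 = 0 by ring,
          Real.rpow_zero, Real.rpow_zero, mul_one]

lemma inv_inv_smul {T : Matrix (Fin d) (Fin d) ℝ} (hT : IsUnit T.det) {c : ℝ} (hc : c ≠ 0) :
    (c⁻¹ • T)⁻¹ = c • T⁻¹ :=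
  inv_eq_left_inv <| by rw [smul_mul_smul, mul_inv_cancel₀ hc, one_smul, nonsing_inv_mul T hT]

end

theorem consistent_mixture_solves_MFG_general {d K : ℕ}
    (ε : ℝ) (hε : 0 < ε)
    (f : (Fin d → ℝ) → ℝ)
    (β : Fin K → ℝ)
    (ν : Fin K → Fin d → ℝ) (T : Fin K → Matrix (Fin d) (Fin d) ℝ)
    (hTpos : ∀ k, (T k).PosDef)
    -- the mixture components and the mixture :
    (mk : Fin K → (Fin d → ℝ) → ℝ) (hmk : ∀ k x, mk k x = gaussian (ν k) (T k) x)
    -- the responsibilities :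
    (γ : Fin K → (Fin d → ℝ) → ℝ)
    -- consistency with the data set, with parameter ε :
    (hmean : ∀ k i, ν k i = (∫ x, x i * γ k x * f x) / ∫ x, γ k x * f x)
    (hTcons : ∀ k i j, T k i j =
      ε * (∫ x, (x i - ν k i) * (x j - ν k j) * γ k x * f x) / ∫ x, γ k x * f x)
    (hweight : ∀ k, β k = ∫ x, γ k x * f x)
    -- the means and covariance matrices computed with respect to the data set :
    (μ : Fin K → Fin d → ℝ)
    (hμ : ∀ k i, μ k i = (∫ x, x i * γ k x * f x) / ∫ x, γ k x * f x)
    (Sg : Fin K → Matrix (Fin d) (Fin d) ℝ)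
    (hSg : ∀ k i j, Sg k i j =
      (∫ x, (x i - μ k i) * (x j - μ k j) * γ k x * f x) / ∫ x, γ k x * f x)
    -- the candidate solution :
    (u : Fin K → (Fin d → ℝ) → ℝ)
    (hu : ∀ k x, u k x = ε / 2 * ((x - ν k) ⬝ᵥ ((T k)⁻¹ *ᵥ (x - ν k))))
    (lam : Fin K → ℝ) (hlam : ∀ k, lam k = ε ^ 2 * (T k)⁻¹.trace) :
    ∀ k,
      (∀ x, -ε * lap (u k) x + 1 / 2 * (grad (u k) x ⬝ᵥ grad (u k) x) + lam k =
        1 / 2 * ((x - μ k) ⬝ᵥ (((Sg k)⁻¹)ᵀ *ᵥ ((Sg k)⁻¹ *ᵥ (x - μ k))))) ∧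
      (∀ x, ε * lap (mk k) x + dvg (fun y => mk k y • grad (u k) y) x = 0) ∧
      (β k = ∫ x, γ k x * f x) ∧
      (∀ x, 0 ≤ mk k x) ∧ (∫ x, mk k x = 1) ∧ u k (μ k) = 0 := by
  intro k
  have hμν : μ k = ν k := funext fun i => (hμ k i).trans (hmean k i).symm
  have hA : (T k)⁻¹.IsSymm := isHermitian_iff_isSymm.mp (hTpos k).inv.isHermitian
  have hSg_inv : (Sg k)⁻¹ = ε • (T k)⁻¹ := by
    have hSg_eq : Sg k = ε⁻¹ • T k := by
      ext i j
      rw [Matrix.smul_apply, smul_eq_mul, hSg, hμν, hTcons]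
      field_simp
    rw [hSg_eq, inv_inv_smul (hTpos k).det_pos.ne'.isUnit hε.ne']
  have hu_eq : u k = fun y => ε / 2 * ((y - ν k) ⬝ᵥ ((T k)⁻¹ *ᵥ (y - ν k))) := funext (hu k)
  have hmk_eq : mk k = gaussian (ν k) (T k) := funext (hmk k)
  refine ⟨fun x => ?_, fokkerPlanck_of_smul_grad_eq fun y => ?_, hweight k, fun x => ?_, ?_, ?_⟩
  · rw [hμν, hSg_inv, hu_eq, hlam k]
    exact hamiltonJacobi_half_mul_quadForm hA ε (ν k) x
  · rw [hu_eq, hmk_eq]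
    exact gaussian_smul_grad_half_mul_quadForm hA ε (ν k) y
  · rw [hmk_eq]
    exact gaussian_nonneg (hTpos k).det_pos.le (ν k) x
  · rw [hmk_eq]
    exact integral_gaussian_eq_one (hTpos k) (ν k)
  · rw [hu, hμν, sub_self, mulVec_zero, dotProduct_zero, mul_zero]

/-- If `m(x) = Σ_k β_k N(x|ν_k,T_k)` is a Gaussian mixture consistent with the data set `f`
with parameter `ε > 0`, then the quadruples `(u_k, λ_k, m_k, β_k)` with
`u_k(x) = (ε/2)(x-ν_k)ᵀ T_k⁻¹ (x-ν_k)`, `λ_k = ε² Tr(T_k⁻¹)`, `m_k(x) = N(x|ν_k,T_k)`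
solve the multi-population mean field games system. -/
theorem consistent_mixture_solves_MFG {d K : ℕ}
    (ε : ℝ) (hε : 0 < ε)
    (f : (Fin d → ℝ) → ℝ) (hf0 : ∀ x, 0 ≤ f x) (hf1 : ∫ x, f x = 1)
    (β : Fin K → ℝ) (hβ : ∀ k, β k ∈ Set.Ioo (0 : ℝ) 1) (hβ1 : ∑ k, β k = 1)
    (ν : Fin K → Fin d → ℝ) (T : Fin K → Matrix (Fin d) (Fin d) ℝ)
    (hTsymm : ∀ k, (T k).IsSymm) (hTpos : ∀ k, (T k).PosDef)
    -- the mixture components and the mixture :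
    (mk : Fin K → (Fin d → ℝ) → ℝ) (hmk : ∀ k x, mk k x = gaussian (ν k) (T k) x)
    (m : (Fin d → ℝ) → ℝ) (hm : ∀ x, m x = ∑ k, β k * mk k x)
    -- the responsibilities :
    (γ : Fin K → (Fin d → ℝ) → ℝ) (hγ : ∀ k x, γ k x = β k * mk k x / m x)
    -- consistency with the data set, with parameter ε :
    (hmean : ∀ k i, ν k i = (∫ x, x i * γ k x * f x) / ∫ x, γ k x * f x)
    (hTcons : ∀ k i j, T k i j =
      ε * (∫ x, (x i - ν k i) * (x j - ν k j) * γ k x * f x) / ∫ x, γ k x * f x)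
    (hweight : ∀ k, β k = ∫ x, γ k x * f x)
    -- the means and covariance matrices computed with respect to the data set :
    (μ : Fin K → Fin d → ℝ)
    (hμ : ∀ k i, μ k i = (∫ x, x i * γ k x * f x) / ∫ x, γ k x * f x)
    (Sg : Fin K → Matrix (Fin d) (Fin d) ℝ)
    (hSg : ∀ k i j, Sg k i j =
      (∫ x, (x i - μ k i) * (x j - μ k j) * γ k x * f x) / ∫ x, γ k x * f x)
    -- the candidate solution :
    (u : Fin K → (Fin d → ℝ) → ℝ)
    (hu : ∀ k x, u k x = ε / 2 * ((x - ν k) ⬝ᵥ ((T k)⁻¹ *ᵥ (x - ν k))))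
    (lam : Fin K → ℝ) (hlam : ∀ k, lam k = ε ^ 2 * (T k)⁻¹.trace) :
    ∀ k,
      (∀ x, -ε * lap (u k) x + 1 / 2 * (grad (u k) x ⬝ᵥ grad (u k) x) + lam k =
        1 / 2 * ((x - μ k) ⬝ᵥ (((Sg k)⁻¹)ᵀ *ᵥ ((Sg k)⁻¹ *ᵥ (x - μ k))))) ∧
      (∀ x, ε * lap (mk k) x + dvg (fun y => mk k y • grad (u k) y) x = 0) ∧
      (β k = ∫ x, γ k x * f x) ∧
      (∀ x, 0 ≤ mk k x) ∧ (∫ x, mk k x = 1) ∧ u k (μ k) = 0 :=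
  consistent_mixture_solves_MFG_general ε hε f β ν T hTpos mk hmk γ hmean hTcons hweight μ hμ Sg hSg
    u hu lam hlam
end
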